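/- Let G be a MAP instance with no {0,1}-edge-pairs that has exactly q redundant 4-cycles, and let Ĝ be the multigraph obtained from G by contracting all redundant 4-cycles. Then opt(G) = opt(Ĝ) + 2q. -/

import Mathlib

set_option autoImplicit false

/-!  A formal framework for the Matching Augmentation Problem (MAP):
loopless multigraphs with edge costs in `{0,1}` (given by the predicate
`isZero` marking the zero-edges). -/

/-- A finite loopless multigraph together with `{0,1}` edge costs:
`isZero e` means that the edge `e` has cost zero (otherwise it is a unit-edge). -/
structure CostGraph where
  V : Type
  E : Type
  finV : Finite V
  finE : Finite E
  ends : E → Sym2 V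
  loopless : ∀ e, ¬ (ends e).IsDiag
  isZero : E → Prop

namespace CostGraph

variable (G : CostGraph)

/-- `x` and `y` are joined by an edge of `F` and both lie in the node set `S`. -/
def Adj (S : Set G.V) (F : Set G.E) (x y : G.V) : Prop :=
  x ∈ S ∧ y ∈ S ∧ ∃ e ∈ F, G.ends e = s(x, y)

/-- Reachability in the sub-multigraph with node set `S` and edge set `F`. -/
def Reachable (S : Set G.V) (F : Set G.E) (x y : G.V) : Prop :=
  Relation.ReflTransGen (G.Adj S F) x y

/-- The sub-multigraph with node set `S` and those edges of `F` having both
end nodes in `S` is connected (in particular `S` is nonempty). -/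
def ConnectedOn (S : Set G.V) (F : Set G.E) : Prop :=
  S.Nonempty ∧ ∀ x ∈ S, ∀ y ∈ S, G.Reachable S F x y

/-- The sub-multigraph with node set `S` and edge set `F` is 2-edge-connected:
it has at least two nodes and removing any one edge leaves it connected. -/
def TwoECOn (S : Set G.V) (F : Set G.E) : Prop :=
  1 < S.ncard ∧ G.ConnectedOn S F ∧ ∀ e : G.E, G.ConnectedOn S (F \ {e})

/-- `F` is the edge set of a 2-edge-connected spanning subgraph (2-ECSS) of `G`. -/
def TwoEC (F : Set G.E) : Prop := G.TwoECOn Set.univ F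

/-- The cost of a set of edges: the number of unit-edges in it. -/
noncomputable def cost (F : Set G.E) : ℕ := {e ∈ F | ¬ G.isZero e}.ncard

/-- `opt G` is the minimum cost of a 2-ECSS of `G`. -/
noncomputable def opt : ℕ := sInf (G.cost '' {F | G.TwoEC F})

/-- `F` is a 2-edge cover: every node is incident to at least two edges of `F`. -/
def TwoEdgeCover (F : Set G.E) : Prop :=
  ∀ v : G.V, 2 ≤ {e ∈ F | v ∈ G.ends e}.ncard

/-- `tau G` is the minimum cost of a 2-edge cover of `G`. -/
noncomputable def tau : ℕ := sInf (G.cost '' {F | G.TwoEdgeCover F})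

/-- The zero-edges form a matching: no two distinct zero-edges share an end node. -/
def ZeroMatching : Prop :=
  ∀ e f : G.E, G.isZero e → G.isZero f → e ≠ f → ∀ x : G.V, x ∈ G.ends e → x ∉ G.ends f

/-- A MAP instance: a (finite, loopless) multigraph with `{0,1}` edge costs whose
zero-edges form a matching and which is 2-edge-connected. -/
def IsMAP : Prop := G.ZeroMatching ∧ G.TwoEC Set.univ

/-- The degree of a node: the number of edges incident to it. -/
noncomputable def degree (v : G.V) : ℕ := {e : G.E | v ∈ G.ends e}.ncard

/-- `e, f` form a `{0,1}`-edge-pair: parallel edges, `e` of cost zero, `f` of cost one. -/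
def IsZeroOnePair (e f : G.E) : Prop :=
  e ≠ f ∧ G.ends e = G.ends f ∧ G.isZero e ∧ ¬ G.isZero f

/-- `G` has no `{0,1}`-edge-pairs. -/
def NoZeroOnePair : Prop := ∀ e f, ¬ G.IsZeroOnePair e f

/-- `v` is a cut node: deleting `v` leaves a disconnected (or empty) graph. -/
def IsCutNode (v : G.V) : Prop := ¬ G.ConnectedOn ({v}ᶜ) Set.univ

/-- `{v, w}` is a bad-pair: `vw` is a zero-edge and deleting both `v` and `w`
disconnects the graph. -/
def IsBadPair (v w : G.V) : Prop :=
  (∃ e, G.isZero e ∧ G.ends e = s(v, w)) ∧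
    ¬ G.ConnectedOn (({v, w} : Set G.V)ᶜ) Set.univ

/-- The number of bad-pairs of `G` (counted as unordered pairs). -/
noncomputable def badPairCount : ℕ :=
  {z : Sym2 G.V | ∃ a b, z = s(a, b) ∧ G.IsBadPair a b}.ncard

/-- `C` is (the node set of) a connected component of the sub-multigraph with node
set `S` and edge set `F`. -/
def IsCompOf (S : Set G.V) (F : Set G.E) (C : Set G.V) : Prop :=
  C ⊆ S ∧ C.Nonempty ∧ G.ConnectedOn C F ∧
    ∀ x ∈ C, ∀ y ∈ S, G.Adj S F x y → y ∈ C

/-- `Q` is the node set of a redundant 4-cycle: a 4-cycle `u₁u₂u₃u₄` with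
`V(C) ≠ V(G)`, two non-adjacent edges of cost zero and two non-adjacent nodes
of degree two in `G`. -/
def IsRed4CycleOn (Q : Set G.V) : Prop :=
  ∃ (u₁ u₂ u₃ u₄ : G.V) (e₁ e₂ e₃ e₄ : G.E),
    Q = {u₁, u₂, u₃, u₄} ∧
    u₁ ≠ u₂ ∧ u₁ ≠ u₃ ∧ u₁ ≠ u₄ ∧ u₂ ≠ u₃ ∧ u₂ ≠ u₄ ∧ u₃ ≠ u₄ ∧
    e₁ ≠ e₂ ∧ e₁ ≠ e₃ ∧ e₁ ≠ e₄ ∧ e₂ ≠ e₃ ∧ e₂ ≠ e₄ ∧ e₃ ≠ e₄ ∧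
    G.ends e₁ = s(u₁, u₂) ∧ G.ends e₂ = s(u₂, u₃) ∧
    G.ends e₃ = s(u₃, u₄) ∧ G.ends e₄ = s(u₄, u₁) ∧
    G.isZero e₁ ∧ G.isZero e₃ ∧
    G.degree u₂ = 2 ∧ G.degree u₄ = 2 ∧
    Q ≠ Set.univ

/-- A well-structured MAP instance: no `{0,1}`-edge-pairs, no redundant 4-cycles,
no cut nodes and no bad-pairs. -/
def WellStructured : Prop :=
  G.IsMAP ∧ G.NoZeroOnePair ∧ (∀ Q, ¬ G.IsRed4CycleOn Q) ∧
    (∀ v, ¬ G.IsCutNode v) ∧ (∀ v w, ¬ G.IsBadPair v w)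

/-- `G` is 2-node-connected: more than two nodes and deleting any one node
leaves a connected graph. -/
def TwoNC : Prop :=
  2 < Nat.card G.V ∧ ∀ v : G.V, G.ConnectedOn ({v}ᶜ) Set.univ

/-- Bridge of the sub-multigraph with node set `S` and edge set `F`: an edge of `F`
inside `S` whose removal disconnects its end nodes. -/
def IsBridgeOn (S : Set G.V) (F : Set G.E) (e : G.E) : Prop :=
  e ∈ F ∧ (∀ x ∈ G.ends e, x ∈ S) ∧
    ∀ x y, G.ends e = s(x, y) → ¬ G.Reachable S (F \ {e}) x y

/-- Bridge of the spanning subgraph `(V, F)`. -/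
def IsBridge (F : Set G.E) (e : G.E) : Prop := G.IsBridgeOn Set.univ F e

/-- `B` is (the node set of) a 2ec-block of the spanning subgraph `(V, F)`:
a maximal connected bridgeless subgraph with at least two nodes, equivalently a
connected component with at least two nodes of the graph obtained by deleting
all bridges. -/
def IsTwoECBlock (F : Set G.E) (B : Set G.V) : Prop :=
  G.IsCompOf Set.univ (F \ {e | G.IsBridge F e}) B ∧ 2 ≤ B.ncard

/-- Delete a set `D` of edges. -/
noncomputable def deleteEdges (D : Set G.E) : CostGraph where
  V := G.V
  E := {e : G.E // e ∉ D}
  finV := G.finV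
  finE := by haveI := G.finE; exact Subtype.finite
  ends e := G.ends e.1
  loopless e := G.loopless e.1
  isZero e := G.isZero e.1

/-- The sub-instance induced on a set `S` of nodes. -/
noncomputable def induce (S : Set G.V) : CostGraph where
  V := ↥S
  E := {e : G.E // ∀ x ∈ G.ends e, x ∈ S}
  finV := by haveI := G.finV; exact Subtype.finite
  finE := by haveI := G.finE; exact Subtype.finite
  ends e := (G.ends e.1).pmap Subtype.mk e.2
  loopless e := by
    intro hd
    exact G.loopless e.1
      (by simpa [Sym2.pmap_subtype_map_subtypeVal] using hd.map (f := Subtype.val))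
  isZero e := G.isZero e.1

/-- Contraction of `G` along (the equivalence generated by) a relation `R`:
node classes are identified, and edges joining identified nodes are removed
(no loops are created). -/
noncomputable def contract (R : G.V → G.V → Prop) : CostGraph where
  V := Quotient (Relation.EqvGen.setoid R)
  E := {e : G.E // ¬ (Sym2.map (Quotient.mk (Relation.EqvGen.setoid R)) (G.ends e)).IsDiag}
  finV := by haveI := G.finV; exact Quotient.finite _
  finE := by haveI := G.finE; exact Subtype.finite
  ends e := Sym2.map (Quotient.mk (Relation.EqvGen.setoid R)) (G.ends e.1)
  loopless e := e.2
  isZero e := G.isZero e.1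

/-- The relation identifying the nodes of each redundant 4-cycle. -/
def red4Rel (x y : G.V) : Prop := ∃ Q, G.IsRed4CycleOn Q ∧ x ∈ Q ∧ y ∈ Q

/-- The multigraph obtained from `G` by contracting all redundant 4-cycles. -/
noncomputable def contractRed4 : CostGraph := G.contract G.red4Rel

/-- For a bad-pair `{v,w}` and a bp-component `C`: the sub-instance `C^{v,w}`
induced on `V(C) ∪ {v, w}`. -/
noncomputable def bpUp (v w : G.V) (C : Set G.V) : CostGraph :=
  G.induce (C ∪ {v, w})

/-- For a bad-pair `{v,w}` and a bp-component `C`: the instance `C^⊘`, obtained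
from `C^{v,w}` by contracting the zero-edge `vw` if `C` has at least two nodes,
and equal to `C^{v,w}` if `C` has exactly one node. -/
noncomputable def bpContr (v w : G.V) (C : Set G.V) : CostGraph :=
  if 2 ≤ C.ncard then
    (G.bpUp v w C).contract (fun x y => x.1 = v ∧ y.1 = w)
  else G.bpUp v w C

/-- Every edge of `C^⊘` is an edge of `G`. -/
noncomputable def bpContrEdge (v w : G.V) (C : Set G.V) :
    (G.bpContr v w C).E → G.E := by
  unfold bpContr
  by_cases h : 2 ≤ C.ncard
  · rw [if_pos h]; exact fun e => e.1.1
  · rw [if_neg h]; exact fun e => e.1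

/-- The sub-multigraph `(S, F)` is 2-node-connected. -/
def TwoNCOn (S : Set G.V) (F : Set G.E) : Prop :=
  2 < S.ncard ∧ ∀ v : G.V, G.ConnectedOn (S \ {v}) F

/-- The sub-multigraph `(S, F)` consists of two nodes joined by two parallel edges. -/
def IsParallelPairBlock (S : Set G.V) (F : Set G.E) : Prop :=
  S.ncard = 2 ∧ ∃ e f, e ≠ f ∧ G.ends e = G.ends f ∧ F = {e, f}

/-- `(B i, F i)` (for `i : Fin k`) are the blocks of `G`: each block is 2-node-connected
or a pair of nodes joined by two parallel edges, the edge set of `G` is partitioned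
among the blocks, each `B i` is the set of end nodes of the edges of `F i`, and any
two blocks share at most one node. -/
def IsBlockDecomp {k : ℕ} (B : Fin k → Set G.V) (F : Fin k → Set G.E) : Prop :=
  (∀ i, ∀ e ∈ F i, ∀ x ∈ G.ends e, x ∈ B i) ∧
  (∀ i, B i = {x | ∃ e ∈ F i, x ∈ G.ends e}) ∧
  (Set.univ : Set G.E) = ⋃ i, F i ∧
  (∀ i j, i ≠ j → Disjoint (F i) (F j)) ∧
  (∀ i j, i ≠ j → (B i ∩ B j).ncard ≤ 1) ∧
  (∀ i, G.TwoNCOn (B i) (F i) ∨ G.IsParallelPairBlock (B i) (F i))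

end CostGraph

/-- `TauHatRel G t` holds when `t` is a value of `τ̂` for `G`, i.e. a value obtainable
by the following recursion: if `G` has no redundant 4-cycles and no cut nodes
(so it is well-structured provided it has no `{0,1}`-edge-pairs and no bad-pairs)
then `τ̂(G) = τ(G)`; otherwise contract all (`q`, say) redundant 4-cycles of `G`,
split the resulting graph at its cut nodes into its blocks `G₁, …, G_k`, and set
`τ̂(G) = 2q + τ̂(G₁) + … + τ̂(G_k)`. -/
inductive TauHatRel : CostGraph → ℕ → Prop where
  | base (G : CostGraph)
      (h4 : ∀ Q, ¬ G.IsRed4CycleOn Q) (hc : ∀ v, ¬ G.IsCutNode v) :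
      TauHatRel G G.tau
  | step (G : CostGraph) (k : ℕ)
      (B : Fin k → Set G.contractRed4.V) (F : Fin k → Set G.contractRed4.E)
      (t : Fin k → ℕ)
      (hobstr : (∃ Q, G.IsRed4CycleOn Q) ∨ (∃ v, G.IsCutNode v))
      (hdec : G.contractRed4.IsBlockDecomp B F)
      (ht : ∀ i, TauHatRel (G.contractRed4.induce (B i)) (t i)) :
      TauHatRel G (2 * {Q | G.IsRed4CycleOn Q}.ncard + ∑ i, t i)

namespace CostGraph

/-- `τ̂(G)`: the value associated to `G` by the recursion of `TauHatRel`. -/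
noncomputable def tauHat (G : CostGraph) : ℕ := sInf {t | TauHatRel G t}

open Classical in
/-- The lower bound `lb(G)`: `τ̂(G)` if `G` has no `{0,1}`-edge-pairs, no cut nodes
and no bad-pairs, and `opt(G)` otherwise. -/
noncomputable def lb (G : CostGraph) : ℕ :=
  if G.NoZeroOnePair ∧ (∀ v, ¬ G.IsCutNode v) ∧ (∀ v w, ¬ G.IsBadPair v w)
  then G.tauHat else G.opt

end CostGraph

/-!
Both edges at a node of degree two lie in every 2-ECSS, so a 2-ECSS of `G` contains all four
edges of every redundant 4-cycle. Two of them are unit-edges, and since the zero-edges form a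
matching the redundant 4-cycles are node-disjoint; this gives `2q` distinct unit-edges, which
vanish in `Ĝ`, while the remaining edges form a 2-ECSS of `Ĝ`. Conversely, a 2-ECSS of `Ĝ`
together with all edges of the redundant 4-cycles is a 2-ECSS of `G`, because a 4-cycle stays
connected after deleting any one edge.
-/

namespace CostGraph

instance (G : CostGraph) : Finite G.V := G.finV

instance (G : CostGraph) : Finite G.E := G.finE

variable {G : CostGraph}

section Connectivity

variable {S : Set G.V} {F F' : Set G.E} {x y : G.V}

lemma Adj.symm (h : G.Adj S F x y) : G.Adj S F y x := by
  obtain ⟨hx, hy, e, he, hends⟩ := h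
  exact ⟨hy, hx, e, he, hends.trans Sym2.eq_swap⟩

lemma Reachable.single (h : G.Adj S F x y) : G.Reachable S F x y :=
  Relation.ReflTransGen.single h

lemma Reachable.trans {z : G.V} (hxy : G.Reachable S F x y) (hyz : G.Reachable S F y z) :
    G.Reachable S F x z :=
  Relation.ReflTransGen.trans hxy hyz

lemma Reachable.symm (h : G.Reachable S F x y) : G.Reachable S F y x := by
  induction h with
  | refl => exact .refl
  | tail _ hadj ih => exact ih.head hadj.symm

lemma Reachable.mono (hF : F ⊆ F') (h : G.Reachable S F x y) : G.Reachable S F' x y :=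
  Relation.ReflTransGen.mono (fun _ _ ⟨hx, hy, e, he, hends⟩ => ⟨hx, hy, e, hF he, hends⟩) _ _ h

lemma Reachable.exists_mem_ends_of_ne (h : G.Reachable S F x y) (hne : x ≠ y) :
    ∃ e ∈ F, x ∈ G.ends e := by
  rcases h.cases_head with rfl | ⟨z, ⟨-, -, e, he, hends⟩, -⟩
  · exact absurd rfl hne
  · exact ⟨e, he, hends ▸ Sym2.mem_mk_left x z⟩

lemma ConnectedOn.mono (hF : F ⊆ F') (h : G.ConnectedOn S F) : G.ConnectedOn S F' :=
  ⟨h.1, fun x hx y hy => (h.2 x hx y hy).mono hF⟩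

lemma TwoECOn.connectedOn_sdiff {D : Set G.E} (hF : G.TwoECOn S F) (hD : D.Subsingleton) :
    G.ConnectedOn S (F \ D) := by
  rcases hD.eq_empty_or_singleton with rfl | ⟨e, rfl⟩
  · simpa using hF.2.1
  · exact hF.2.2 e

lemma eq_or_eq_of_degree_eq_two {v : G.V} (hv : G.degree v = 2) {g g' e : G.E}
    (hne : g ≠ g') (hg : v ∈ G.ends g) (hg' : v ∈ G.ends g') (he : v ∈ G.ends e) :
    e = g ∨ e = g' := by
  have hall : ({g, g'} : Set G.E) = {e | v ∈ G.ends e} :=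
    Set.eq_of_subset_of_ncard_le (by rintro _ (rfl | rfl) <;> assumption)
      (by rw [Set.ncard_pair hne]; exact hv.le) (Set.toFinite _)
  have he' : e ∈ ({g, g'} : Set G.E) := hall ▸ he
  simpa using he'

lemma TwoEC.twoEdgeCover (hF : G.TwoEC F) : G.TwoEdgeCover F := by
  intro v
  obtain ⟨w, hw⟩ : ∃ w, w ≠ v := by
    obtain ⟨a, -, b, -, hab⟩ := Set.one_lt_ncard_iff_nontrivial.mp hF.1
    by_cases ha : a = v
    exacts [⟨b, fun hb => hab (ha.trans hb.symm)⟩, ⟨a, ha⟩]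
  obtain ⟨e, he, hve⟩ := (hF.2.1.2 v trivial w trivial).exists_mem_ends_of_ne hw.symm
  obtain ⟨e', he', hve'⟩ := ((hF.2.2 e).2 v trivial w trivial).exists_mem_ends_of_ne hw.symm
  calc 2 = ({e, e'} : Set G.E).ncard := (Set.ncard_pair fun h => he'.2 h.symm).symm
    _ ≤ {e ∈ F | v ∈ G.ends e}.ncard :=
      Set.ncard_le_ncard (by rintro _ (rfl | rfl); exacts [⟨he, hve⟩, ⟨he'.1, hve'⟩])

lemma TwoEC.mem_of_degree_eq_two (hF : G.TwoEC F) {v : G.V} (hv : G.degree v = 2) {e : G.E}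
    (he : v ∈ G.ends e) : e ∈ F := by
  have hsub : {e ∈ F | v ∈ G.ends e} ⊆ {e | v ∈ G.ends e} := fun _ h => h.2
  have heq := Set.eq_of_subset_of_ncard_le hsub (hv.trans_le (hF.twoEdgeCover v)) (Set.toFinite _)
  exact (heq.symm ▸ he : e ∈ {e ∈ F | v ∈ G.ends e}).1

lemma opt_le (hF : G.TwoEC F) : G.opt ≤ G.cost F :=
  Nat.sInf_le ⟨F, hF, rfl⟩

lemma exists_cost_eq_opt (hF : G.TwoEC F) : ∃ F, G.TwoEC F ∧ G.cost F = G.opt :=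
  Nat.sInf_mem (s := G.cost '' {F | G.TwoEC F}) ⟨_, F, hF, rfl⟩

end Connectivity

section Cost

variable {A B : Set G.E}

lemma cost_le_cost_of_forall (h : ∀ e ∈ A, ¬ G.isZero e → e ∈ B) : G.cost A ≤ G.cost B :=
  Set.ncard_le_ncard (fun e ⟨he, hz⟩ => ⟨h e he hz, hz⟩) (Set.toFinite _)

lemma cost_union_le : G.cost (A ∪ B) ≤ G.cost A + G.cost B :=
  calc G.cost (A ∪ B) ≤ ({e ∈ A | ¬ G.isZero e} ∪ {e ∈ B | ¬ G.isZero e}).ncard :=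
        Set.ncard_le_ncard (fun _ ⟨he, hz⟩ => he.imp (⟨·, hz⟩) (⟨·, hz⟩)) (Set.toFinite _)
    _ ≤ G.cost A + G.cost B := Set.ncard_union_le _ _

lemma cost_sep_add_cost_sep_not (p : G.E → Prop) :
    G.cost {e ∈ A | p e} + G.cost {e ∈ A | ¬ p e} = G.cost A := by
  unfold cost
  rw [← Set.ncard_inter_add_ncard_sdiff_eq_ncard {e ∈ A | ¬ G.isZero e} {e | p e}]
  congr 2 <;> ext <;> simp only [Set.mem_ofPred_eq, Set.mem_inter_iff, Set.mem_sdiff] <;> tauto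

lemma cost_biUnion {ι : Type*} {t : Set ι} (ht : t.Finite) {s : ι → Set G.E}
    (hs : t.PairwiseDisjoint s) : G.cost (⋃ i ∈ t, s i) = ∑ᶠ i ∈ t, G.cost (s i) := by
  have hsep : {e ∈ ⋃ i ∈ t, s i | ¬ G.isZero e} = ⋃ i ∈ t, {e ∈ s i | ¬ G.isZero e} := by
    ext; simp only [Set.mem_ofPred_eq, Set.mem_iUnion₂, exists_prop]; tauto
  rw [cost, hsep, ht.ncard_biUnion (fun _ _ => Set.toFinite _)
    (hs.mono fun i => Set.sep_subset (s i) _)]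
  rfl

end Cost

section Contraction

variable {R : G.V → G.V → Prop}

def contractMap (R : G.V → G.V → Prop) : G.V → (G.contract R).V :=
  Quotient.mk (Relation.EqvGen.setoid R)

lemma contract_ends (f : (G.contract R).E) :
    (G.contract R).ends f = (G.ends f.1).map (G.contractMap R) := rfl

lemma contractMap_eq_iff {x y : G.V} :
    G.contractMap R x = G.contractMap R y ↔ Relation.EqvGen R x y :=
  Quotient.eq

lemma contractMap_surjective : Function.Surjective (G.contractMap R) :=
  Quotient.mk_surjective

lemma cost_image_val (FH : Set (G.contract R).E) :
    G.cost (Subtype.val '' FH) = (G.contract R).cost FH := by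
  unfold cost
  rw [← Set.ncard_image_of_injective {f ∈ FH | ¬ (G.contract R).isZero f}
    (f := fun f : (G.contract R).E => f.1) Subtype.val_injective]
  congr 1
  ext e
  constructor
  · rintro ⟨⟨f, hf, rfl⟩, hz⟩
    exact ⟨f, ⟨hf, hz⟩, rfl⟩
  · rintro ⟨f, ⟨hf, hz⟩, rfl⟩
    exact ⟨⟨f, hf, rfl⟩, hz⟩

lemma cost_contract_preimage_val (F : Set G.E) :
    (G.contract R).cost {f | f.1 ∈ F}
      = G.cost {e ∈ F | ¬ ((G.ends e).map (G.contractMap R)).IsDiag} := by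
  rw [← cost_image_val]
  congr 1
  ext e
  constructor
  · rintro ⟨f, hf, rfl⟩
    exact ⟨hf, f.2⟩
  · rintro ⟨he, hd⟩
    exact ⟨⟨e, hd⟩, he, rfl⟩

lemma Reachable.contract {F : Set G.E} {x y : G.V} (h : G.Reachable Set.univ F x y) :
    (G.contract R).Reachable Set.univ {f | f.1 ∈ F} (G.contractMap R x) (G.contractMap R y) := by
  induction h with
  | refl => exact .refl
  | @tail y z _ hyz ih =>
    obtain ⟨-, -, e, he, hends⟩ := hyz
    by_cases hd : ((G.ends e).map (G.contractMap R)).IsDiag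
    · rw [hends, Sym2.map_mk, Sym2.mk_isDiag_iff] at hd
      exact hd ▸ ih
    · refine ih.tail ⟨trivial, trivial, ⟨e, hd⟩, he, ?_⟩
      show (G.ends e).map (G.contractMap R) = _
      rw [hends, Sym2.map_mk]

lemma Reachable.of_contract {A : Set G.E} {B : Set (G.contract R).E} {x y : G.V}
    (hB : ∀ f ∈ B, f.1 ∈ A)
    (hclass : ∀ a b, Relation.EqvGen R a b → G.Reachable Set.univ A a b)
    (h : (G.contract R).Reachable Set.univ B (G.contractMap R x) (G.contractMap R y)) :
    G.Reachable Set.univ A x y := by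
  generalize hξ : G.contractMap R y = ξ at h
  induction h generalizing y with
  | refl => exact hclass x y (contractMap_eq_iff.mp hξ.symm)
  | @tail η _ _ hadj ih =>
    obtain ⟨-, -, f, hf, hends⟩ := hadj
    obtain ⟨a, b, hfab⟩ := Sym2.exists.mp ⟨G.ends f.1, rfl⟩
    rw [contract_ends, hfab, Sym2.map_mk, Sym2.eq_iff] at hends
    have hadj : G.Adj Set.univ A a b := ⟨trivial, trivial, f.1, hB f hf, hfab⟩
    rcases hends with ⟨ha, hb⟩ | ⟨ha, hb⟩
    · exact (ih ha).trans (.head hadj (hclass b y (contractMap_eq_iff.mp (hb.trans hξ.symm))))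
    · exact (ih hb).trans
        (.head hadj.symm (hclass a y (contractMap_eq_iff.mp (ha.trans hξ.symm))))

lemma ConnectedOn.contract {F : Set G.E} (hF : G.ConnectedOn Set.univ F) :
    (G.contract R).ConnectedOn Set.univ {f | f.1 ∈ F} := by
  refine ⟨⟨G.contractMap R hF.1.some, trivial⟩, ?_⟩
  rintro ξ - υ -
  obtain ⟨x, rfl⟩ := contractMap_surjective ξ
  obtain ⟨y, rfl⟩ := contractMap_surjective υ
  exact (hF.2 x trivial y trivial).contract

lemma TwoEC.contract {F : Set G.E} (hF : G.TwoEC F)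
    (hR : 1 < (Set.univ : Set (G.contract R).V).ncard) :
    (G.contract R).TwoEC {f | f.1 ∈ F} :=
  ⟨hR, hF.2.1.contract, fun f =>
    (hF.2.2 f.1).contract.mono fun _ hg => ⟨hg.1, fun h => hg.2 (congrArg Subtype.val h)⟩⟩

lemma TwoEC.of_contract {A : Set G.E} {FH : Set (G.contract R).E}
    (hV : 1 < (Set.univ : Set G.V).ncard) (hFH : (G.contract R).TwoEC FH)
    (hclass : ∀ e a b, Relation.EqvGen R a b → G.Reachable Set.univ (A \ {e}) a b) :
    G.TwoEC (Subtype.val '' FH ∪ A) := by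
  have hconn : ∀ e, G.ConnectedOn Set.univ ((Subtype.val '' FH ∪ A) \ {e}) := by
    intro e
    have hB : (G.contract R).ConnectedOn Set.univ (FH \ {f | f.1 = e}) :=
      hFH.connectedOn_sdiff fun f hf g hg => Subtype.ext (hf.trans hg.symm)
    refine ⟨Set.nonempty_of_ncard_ne_zero (by omega), fun x _ y _ => ?_⟩
    refine (hB.2 _ trivial _ trivial).of_contract (fun f hf => ⟨Or.inl ⟨f, hf.1, rfl⟩, hf.2⟩)
      fun a b hab => (hclass e a b hab).mono (Set.sdiff_subset_sdiff_left Set.subset_union_right)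
  obtain ⟨ξ, -, υ, -, hne⟩ := Set.one_lt_ncard_iff_nontrivial.mp hFH.1
  obtain ⟨f, -, -⟩ := (hFH.2.1.2 ξ trivial υ trivial).exists_mem_ends_of_ne hne
  exact ⟨hV, (hconn f.1).mono Set.sdiff_subset, hconn⟩

end Contraction

section RedundantFourCycles

variable {Q Q' : Set G.V} {x y : G.V}

lemma reachable_of_path {A : Set G.E} {a b c d : G.V} {p q r : G.E}
    (hp : p ∈ A) (hq : q ∈ A) (hr : r ∈ A) (hpe : G.ends p = s(a, b))
    (hqe : G.ends q = s(b, c)) (hre : G.ends r = s(c, d))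
    (hx : x ∈ ({a, b, c, d} : Set G.V)) (hy : y ∈ ({a, b, c, d} : Set G.V)) :
    G.Reachable Set.univ A x y := by
  have hab : G.Reachable Set.univ A a b := .single ⟨trivial, trivial, p, hp, hpe⟩
  have hbc : G.Reachable Set.univ A b c := .single ⟨trivial, trivial, q, hq, hqe⟩
  have hcd : G.Reachable Set.univ A c d := .single ⟨trivial, trivial, r, hr, hre⟩
  have hfrom : ∀ z ∈ ({a, b, c, d} : Set G.V), G.Reachable Set.univ A a z := by
    rintro z (rfl | rfl | rfl | rfl)
    exacts [.refl, hab, hab.trans hbc, (hab.trans hbc).trans hcd]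
  exact (hfrom x hx).symm.trans (hfrom y hy)

structure Red4Cycle (G : CostGraph) (Q : Set G.V) where
  (u₁ u₂ u₃ u₄ : G.V)
  (e₁ e₂ e₃ e₄ : G.E)
  nodes_eq : Q = {u₁, u₂, u₃, u₄}
  e₁_ne_e₂ : e₁ ≠ e₂
  e₁_ne_e₃ : e₁ ≠ e₃
  e₁_ne_e₄ : e₁ ≠ e₄
  e₂_ne_e₃ : e₂ ≠ e₃
  e₂_ne_e₄ : e₂ ≠ e₄
  e₃_ne_e₄ : e₃ ≠ e₄
  ends_e₁ : G.ends e₁ = s(u₁, u₂)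
  ends_e₂ : G.ends e₂ = s(u₂, u₃)
  ends_e₃ : G.ends e₃ = s(u₃, u₄)
  ends_e₄ : G.ends e₄ = s(u₄, u₁)
  isZero_e₁ : G.isZero e₁
  isZero_e₃ : G.isZero e₃
  degree_u₂ : G.degree u₂ = 2
  degree_u₄ : G.degree u₄ = 2
  nodes_ne_univ : Q ≠ Set.univ

lemma IsRed4CycleOn.nonempty_red4Cycle (h : G.IsRed4CycleOn Q) : Nonempty (G.Red4Cycle Q) := by
  obtain ⟨u₁, u₂, u₃, u₄, e₁, e₂, e₃, e₄, hQ, -, -, -, -, -, -, h₁₂, h₁₃, h₁₄, h₂₃, h₂₄, h₃₄,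
    he₁, he₂, he₃, he₄, hz₁, hz₃, hd₂, hd₄, hne⟩ := h
  exact ⟨⟨u₁, u₂, u₃, u₄, e₁, e₂, e₃, e₄, hQ, h₁₂, h₁₃, h₁₄, h₂₃, h₂₄, h₃₄,
    he₁, he₂, he₃, he₄, hz₁, hz₃, hd₂, hd₄, hne⟩⟩

/-- The node set of a redundant 4-cycle is closed under these steps and strongly connected by
them, hence two redundant 4-cycles sharing a node coincide. -/
def red4Step (x y : G.V) : Prop :=
  ∃ e, G.ends e = s(x, y) ∧ (G.isZero e ∨ G.degree x = 2)

/-- The edge set of the redundant 4-cycle on `Q`, described without choosing the cycle. -/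
def red4EdgesOn (Q : Set G.V) : Set G.E :=
  {e | (∀ x ∈ G.ends e, x ∈ Q) ∧ (G.isZero e ∨ ∃ x ∈ G.ends e, G.degree x = 2)}

namespace Red4Cycle

def edges (c : G.Red4Cycle Q) : Set G.E := {c.e₁, c.e₂, c.e₃, c.e₄}

lemma mem_of_mem_ends (c : G.Red4Cycle Q) {e : G.E} (he : e ∈ c.edges) (hx : x ∈ G.ends e) :
    x ∈ Q := by
  rw [c.nodes_eq]
  rcases he with rfl | rfl | rfl | rfl <;>
    simp only [c.ends_e₁, c.ends_e₂, c.ends_e₃, c.ends_e₄, Sym2.mem_iff] at hx <;>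
    simp only [Set.mem_insert_iff, Set.mem_singleton_iff] <;> tauto

lemma mem_edges (c : G.Red4Cycle Q) (hzm : G.ZeroMatching) (hx : x ∈ Q) {e : G.E}
    (he : x ∈ G.ends e) (h : G.isZero e ∨ G.degree x = 2) : e ∈ c.edges := by
  obtain ⟨g, hg, g', hg', hne, hz, hxg, hxg'⟩ : ∃ g ∈ c.edges, ∃ g' ∈ c.edges,
      g ≠ g' ∧ G.isZero g ∧ x ∈ G.ends g ∧ x ∈ G.ends g' := by
    rw [c.nodes_eq] at hx
    rcases hx with rfl | rfl | rfl | rfl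
    · exact ⟨c.e₁, by simp [edges], c.e₄, by simp [edges], c.e₁_ne_e₄, c.isZero_e₁,
        by simp [c.ends_e₁], by simp [c.ends_e₄]⟩
    · exact ⟨c.e₁, by simp [edges], c.e₂, by simp [edges], c.e₁_ne_e₂, c.isZero_e₁,
        by simp [c.ends_e₁], by simp [c.ends_e₂]⟩
    · exact ⟨c.e₃, by simp [edges], c.e₂, by simp [edges], c.e₂_ne_e₃.symm, c.isZero_e₃,
        by simp [c.ends_e₃], by simp [c.ends_e₂]⟩
    · exact ⟨c.e₃, by simp [edges], c.e₄, by simp [edges], c.e₃_ne_e₄, c.isZero_e₃,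
        by simp [c.ends_e₃], by simp [c.ends_e₄]⟩
  rcases h with hz' | hdeg
  · by_contra hge
    exact hzm e g hz' hz (fun h => hge (h ▸ hg)) x he hxg
  · rcases eq_or_eq_of_degree_eq_two hdeg hne hxg hxg' he with rfl | rfl <;> assumption

lemma mem_of_red4Step (c : G.Red4Cycle Q) (hzm : G.ZeroMatching) (hx : x ∈ Q)
    (h : G.red4Step x y) : y ∈ Q := by
  obtain ⟨e, hends, h⟩ := h
  exact c.mem_of_mem_ends (c.mem_edges hzm hx (hends ▸ Sym2.mem_mk_left x y) h)
    (hends ▸ Sym2.mem_mk_right x y)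

lemma reflTransGen_red4Step (c : G.Red4Cycle Q) (hx : x ∈ Q) (hy : y ∈ Q) :
    Relation.ReflTransGen G.red4Step x y := by
  have h₁₂ : G.red4Step c.u₁ c.u₂ := ⟨c.e₁, c.ends_e₁, .inl c.isZero_e₁⟩
  have h₂₃ : G.red4Step c.u₂ c.u₃ := ⟨c.e₂, c.ends_e₂, .inr c.degree_u₂⟩
  have h₃₄ : G.red4Step c.u₃ c.u₄ := ⟨c.e₃, c.ends_e₃, .inl c.isZero_e₃⟩
  have h₄₁ : G.red4Step c.u₄ c.u₁ := ⟨c.e₄, c.ends_e₄, .inr c.degree_u₄⟩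
  rw [c.nodes_eq] at hx hy
  have hto : Relation.ReflTransGen G.red4Step x c.u₁ := by
    rcases hx with rfl | rfl | rfl | rfl
    exacts [.refl, ((Relation.ReflTransGen.single h₂₃).tail h₃₄).tail h₄₁,
      (Relation.ReflTransGen.single h₃₄).tail h₄₁, .single h₄₁]
  have hfrom : Relation.ReflTransGen G.red4Step c.u₁ y := by
    rcases hy with rfl | rfl | rfl | rfl
    exacts [.refl, .single h₁₂, (Relation.ReflTransGen.single h₁₂).tail h₂₃,
      ((Relation.ReflTransGen.single h₁₂).tail h₂₃).tail h₃₄]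
  exact hto.trans hfrom

lemma subset_of_mem (c : G.Red4Cycle Q) (c' : G.Red4Cycle Q') (hzm : G.ZeroMatching)
    (hx : x ∈ Q) (hx' : x ∈ Q') : Q ⊆ Q' := by
  intro y hy
  have hstep := c.reflTransGen_red4Step hx hy
  clear hy
  induction hstep with
  | refl => exact hx'
  | tail _ hstep ih => exact c'.mem_of_red4Step hzm ih hstep

lemma reachable (c : G.Red4Cycle Q) (e : G.E) (hx : x ∈ Q) (hy : y ∈ Q) :
    G.Reachable Set.univ (c.edges \ {e}) x y := by
  have mem : ∀ g ∈ c.edges, g ≠ e → g ∈ c.edges \ {e} := fun g hg hne => ⟨hg, hne⟩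
  have he₁ : c.e₁ ∈ c.edges := by simp [edges]
  have he₂ : c.e₂ ∈ c.edges := by simp [edges]
  have he₃ : c.e₃ ∈ c.edges := by simp [edges]
  have he₄ : c.e₄ ∈ c.edges := by simp [edges]
  rw [c.nodes_eq] at hx hy
  by_cases h₁ : e = c.e₁
  · subst h₁
    refine reachable_of_path (mem _ he₂ c.e₁_ne_e₂.symm) (mem _ he₃ c.e₁_ne_e₃.symm)
      (mem _ he₄ c.e₁_ne_e₄.symm) c.ends_e₂ c.ends_e₃ c.ends_e₄ ?_ ?_ <;>
      simp only [Set.mem_insert_iff, Set.mem_singleton_iff] at hx hy ⊢ <;> tauto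
  by_cases h₂ : e = c.e₂
  · subst h₂
    refine reachable_of_path (mem _ he₃ c.e₂_ne_e₃.symm) (mem _ he₄ c.e₂_ne_e₄.symm)
      (mem _ he₁ c.e₁_ne_e₂) c.ends_e₃ c.ends_e₄ c.ends_e₁ ?_ ?_ <;>
      simp only [Set.mem_insert_iff, Set.mem_singleton_iff] at hx hy ⊢ <;> tauto
  by_cases h₃ : e = c.e₃
  · subst h₃
    refine reachable_of_path (mem _ he₄ c.e₃_ne_e₄.symm) (mem _ he₁ c.e₁_ne_e₃)
      (mem _ he₂ c.e₂_ne_e₃) c.ends_e₄ c.ends_e₁ c.ends_e₂ ?_ ?_ <;>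
      simp only [Set.mem_insert_iff, Set.mem_singleton_iff] at hx hy ⊢ <;> tauto
  exact reachable_of_path (mem _ he₁ (Ne.symm h₁)) (mem _ he₂ (Ne.symm h₂))
    (mem _ he₃ (Ne.symm h₃)) c.ends_e₁ c.ends_e₂ c.ends_e₃ hx hy

lemma cost_edges (c : G.Red4Cycle Q) (hzm : G.ZeroMatching) : G.cost c.edges = 2 := by
  have h₂ : ¬ G.isZero c.e₂ := fun hz =>
    hzm _ _ c.isZero_e₁ hz c.e₁_ne_e₂ c.u₂ (by simp [c.ends_e₁]) (by simp [c.ends_e₂])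
  have h₄ : ¬ G.isZero c.e₄ := fun hz =>
    hzm _ _ c.isZero_e₃ hz c.e₃_ne_e₄ c.u₄ (by simp [c.ends_e₃]) (by simp [c.ends_e₄])
  have hunit : {e ∈ c.edges | ¬ G.isZero e} = {c.e₂, c.e₄} := by
    ext e
    constructor
    · rintro ⟨rfl | rfl | rfl | rfl, hz⟩
      exacts [absurd c.isZero_e₁ hz, .inl rfl, absurd c.isZero_e₃ hz, .inr rfl]
    · rintro (rfl | rfl)
      exacts [⟨by simp [edges], h₂⟩, ⟨by simp [edges], h₄⟩]
  rw [cost, hunit, Set.ncard_pair c.e₂_ne_e₄]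

lemma red4EdgesOn_eq (c : G.Red4Cycle Q) (hzm : G.ZeroMatching) :
    G.red4EdgesOn Q = c.edges := by
  ext e
  constructor
  · rintro ⟨hQ, hz | ⟨x, hx, hdeg⟩⟩
    · exact c.mem_edges hzm (hQ _ (Sym2.out_fst_mem _)) (Sym2.out_fst_mem _) (.inl hz)
    · exact c.mem_edges hzm (hQ x hx) hx (.inr hdeg)
  · intro he
    refine ⟨fun x hx => c.mem_of_mem_ends he hx, ?_⟩
    rcases he with rfl | rfl | rfl | rfl
    exacts [.inl c.isZero_e₁, .inr ⟨c.u₂, by simp [c.ends_e₂], c.degree_u₂⟩, .inl c.isZero_e₃,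
      .inr ⟨c.u₄, by simp [c.ends_e₄], c.degree_u₄⟩]

end Red4Cycle

lemma IsRed4CycleOn.eq_of_mem (hzm : G.ZeroMatching) (hQ : G.IsRed4CycleOn Q)
    (hQ' : G.IsRed4CycleOn Q') (hx : x ∈ Q) (hx' : x ∈ Q') : Q = Q' := by
  obtain ⟨c⟩ := hQ.nonempty_red4Cycle
  obtain ⟨c'⟩ := hQ'.nonempty_red4Cycle
  exact (c.subset_of_mem c' hzm hx hx').antisymm (c'.subset_of_mem c hzm hx' hx)

def red4Edges (G : CostGraph) : Set G.E := ⋃ Q ∈ {Q | G.IsRed4CycleOn Q}, G.red4EdgesOn Q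

lemma cost_red4Edges (hzm : G.ZeroMatching) :
    G.cost G.red4Edges = 2 * {Q | G.IsRed4CycleOn Q}.ncard := by
  have hdisj : {Q | G.IsRed4CycleOn Q}.PairwiseDisjoint G.red4EdgesOn :=
    fun Q hQ Q' hQ' hne => Set.disjoint_left.mpr fun e he he' =>
      hne (hQ.eq_of_mem hzm hQ' (he.1 _ (Sym2.out_fst_mem _)) (he'.1 _ (Sym2.out_fst_mem _)))
  have htwo : ∀ Q ∈ {Q | G.IsRed4CycleOn Q}, G.cost (G.red4EdgesOn Q) = 2 := by
    intro Q hQ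
    obtain ⟨c⟩ := IsRed4CycleOn.nonempty_red4Cycle hQ
    rw [c.red4EdgesOn_eq hzm, c.cost_edges hzm]
  rw [red4Edges, cost_biUnion (Set.toFinite _) hdisj, finsum_mem_congr rfl htwo,
    ← finsum_one, mul_finsum_mem]
  simp only [mul_one]

lemma TwoEC.mem_of_mem_red4Edges {F : Set G.E} (hF : G.TwoEC F) {e : G.E}
    (he : e ∈ G.red4Edges) (hz : ¬ G.isZero e) : e ∈ F := by
  obtain ⟨Q, -, -, hz' | ⟨x, hx, hdeg⟩⟩ := Set.mem_iUnion₂.mp he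
  exacts [absurd hz' hz, hF.mem_of_degree_eq_two hdeg hx]

lemma isDiag_of_mem_red4Edges {e : G.E} (he : e ∈ G.red4Edges) :
    ((G.ends e).map (G.contractMap G.red4Rel)).IsDiag := by
  obtain ⟨Q, hQ, hends, -⟩ := Set.mem_iUnion₂.mp he
  obtain ⟨a, b, hab⟩ := Sym2.exists.mp ⟨G.ends e, rfl⟩
  rw [hab, Sym2.map_mk, Sym2.mk_isDiag_iff, contractMap_eq_iff]
  exact .rel _ _ ⟨Q, hQ, hends a (by simp [hab]), hends b (by simp [hab])⟩

lemma reachable_red4Edges_sdiff (hzm : G.ZeroMatching) (e : G.E)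
    (h : Relation.EqvGen G.red4Rel x y) : G.Reachable Set.univ (G.red4Edges \ {e}) x y := by
  induction h with
  | rel x y hxy =>
    obtain ⟨Q, hQ, hx, hy⟩ := hxy
    obtain ⟨c⟩ := IsRed4CycleOn.nonempty_red4Cycle hQ
    refine (c.reachable e hx hy).mono (Set.sdiff_subset_sdiff_left fun g hg => ?_)
    exact Set.mem_iUnion₂.mpr ⟨Q, hQ, (c.red4EdgesOn_eq hzm).symm ▸ hg⟩
  | refl => exact .refl
  | symm _ _ _ ih => exact ih.symm
  | trans _ _ _ _ _ ih ih' => exact ih.trans ih'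

lemma eq_or_red4Rel_of_eqvGen (hzm : G.ZeroMatching) (h : Relation.EqvGen G.red4Rel x y) :
    x = y ∨ G.red4Rel x y := by
  have hequiv : Equivalence fun x y => x = y ∨ G.red4Rel x y := by
    refine ⟨fun _ => .inl rfl, ?_, ?_⟩
    · rintro x y (rfl | ⟨Q, hQ, hx, hy⟩)
      exacts [.inl rfl, .inr ⟨Q, hQ, hy, hx⟩]
    · rintro x y z (rfl | ⟨Q, hQ, hx, hy⟩) (rfl | ⟨Q', hQ', hy', hz⟩)
      exacts [.inl rfl, .inr ⟨Q', hQ', hy', hz⟩, .inr ⟨Q, hQ, hx, hy⟩,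
        .inr ⟨Q, hQ, hx, hQ'.eq_of_mem hzm hQ hy' hy ▸ hz⟩]
  exact hequiv.eqvGen_iff.mp (Relation.EqvGen.mono (fun _ _ => .inr) _ _ h)

lemma one_lt_ncard_contractRed4 (hzm : G.ZeroMatching) (hV : 1 < (Set.univ : Set G.V).ncard) :
    1 < (Set.univ : Set G.contractRed4.V).ncard := by
  obtain ⟨x, y, hxy⟩ : ∃ x y : G.V, ¬ Relation.EqvGen G.red4Rel x y := by
    by_cases hQ : ∃ Q, G.IsRed4CycleOn Q
    · obtain ⟨Q, hQ⟩ := hQ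
      obtain ⟨c⟩ := hQ.nonempty_red4Cycle
      obtain ⟨z, hz⟩ := (Set.ne_univ_iff_exists_notMem Q).mp c.nodes_ne_univ
      have hu : c.u₁ ∈ Q := by simp [c.nodes_eq]
      refine ⟨c.u₁, z, fun h => ?_⟩
      rcases eq_or_red4Rel_of_eqvGen hzm h with rfl | ⟨Q', hQ', hu', hz'⟩
      exacts [hz hu, hz (hQ'.eq_of_mem hzm hQ hu' hu ▸ hz')]
    · obtain ⟨x, -, y, -, hne⟩ := Set.one_lt_ncard_iff_nontrivial.mp hV
      refine ⟨x, y, fun h => ?_⟩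
      rcases eq_or_red4Rel_of_eqvGen hzm h with rfl | ⟨Q, hQ', -, -⟩
      exacts [hne rfl, hQ ⟨Q, hQ'⟩]
  exact Set.one_lt_ncard_iff_nontrivial.mpr ⟨G.contractMap G.red4Rel x, trivial,
    G.contractMap G.red4Rel y, trivial, fun h => hxy (contractMap_eq_iff.mp h)⟩

lemma opt_contractRed4_add_le (hG : G.IsMAP) :
    G.contractRed4.opt + 2 * {Q | G.IsRed4CycleOn Q}.ncard ≤ G.opt := by
  unfold contractRed4
  obtain ⟨F, hF, hopt⟩ := exists_cost_eq_opt hG.2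
  have hF' : (G.contract G.red4Rel).TwoEC {f | f.1 ∈ F} :=
    hF.contract (one_lt_ncard_contractRed4 hG.1 hF.1)
  calc (G.contract G.red4Rel).opt + 2 * {Q | G.IsRed4CycleOn Q}.ncard
      ≤ G.cost {e ∈ F | ¬ ((G.ends e).map (G.contractMap G.red4Rel)).IsDiag}
        + G.cost {e ∈ F | ((G.ends e).map (G.contractMap G.red4Rel)).IsDiag} := by
        gcongr
        · rw [← cost_contract_preimage_val]
          exact opt_le hF'
        · rw [← cost_red4Edges hG.1]
          exact cost_le_cost_of_forall fun e he hz =>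
            ⟨hF.mem_of_mem_red4Edges he hz, isDiag_of_mem_red4Edges he⟩
    _ = G.opt := by rw [add_comm, cost_sep_add_cost_sep_not, hopt]

lemma opt_le_opt_contractRed4_add (hG : G.IsMAP) :
    G.opt ≤ G.contractRed4.opt + 2 * {Q | G.IsRed4CycleOn Q}.ncard := by
  unfold contractRed4
  obtain ⟨FH, hFH, hopt⟩ :=
    exists_cost_eq_opt (hG.2.contract (R := G.red4Rel) (one_lt_ncard_contractRed4 hG.1 hG.2.1))
  have hF : G.TwoEC (Subtype.val '' FH ∪ G.red4Edges) :=
    hFH.of_contract hG.2.1 fun e _ _ => reachable_red4Edges_sdiff hG.1 e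
  calc G.opt ≤ G.cost (Subtype.val '' FH ∪ G.red4Edges) := opt_le hF
    _ ≤ G.cost (Subtype.val '' FH) + G.cost G.red4Edges := cost_union_le
    _ = (G.contract G.red4Rel).opt + 2 * {Q | G.IsRed4CycleOn Q}.ncard := by
      rw [cost_image_val, hopt, cost_red4Edges hG.1]

end RedundantFourCycles

end CostGraph

theorem opt_contractRed4_general (G : CostGraph) (hG : G.IsMAP)
    (q : ℕ) (hq : {Q | G.IsRed4CycleOn Q}.ncard = q) :
    G.opt = G.contractRed4.opt + 2 * q := by
  subst hq
  exact le_antisymm (G.opt_le_opt_contractRed4_add hG) (G.opt_contractRed4_add_le hG)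

/-- Let `G` be a MAP instance with no `{0,1}`-edge-pairs having
exactly `q` redundant 4-cycles, and let `Ĝ` be obtained from `G` by contracting
all redundant 4-cycles. Then `opt(G) = opt(Ĝ) + 2q`. -/
theorem opt_contractRed4 (G : CostGraph) (hG : G.IsMAP) (h01 : G.NoZeroOnePair)
    (q : ℕ) (hq : {Q | G.IsRed4CycleOn Q}.ncard = q) :
    G.opt = G.contractRed4.opt + 2 * q :=
  opt_contractRed4_general G hG q hq
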